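/- Let W be a type of passwords, S a type of salts, and Y a type of hash values, and let H : W × S → Y be a hash function such that for every salt s, the map w ↦ H(w,s) is injective. Let A be a finite multiset of passwords with o(w,A) the multiplicity of w in A, supp(A) its set of distinct elements, and |A| its total cardinality with multiplicity. Let B be a finite list of (password, salt) pairs, let B_plain be the multiset of password components of B, let B_h be the list of pairs (H(w,s), s) for (w,s) in B, let |B_h| be the length of B_h, and define g(w, B_h) = the number of entries (y,s) of B_h with y = H(w,s). Define F_min(A, B_h) = Σ_{w ∈ supp(A)} min(o(w,A), g(w,B_h)), and define the generalized Jaccard index J(A, B_plain) = (Σ_{w ∈ supp(A) ∪ supp(B_plain)} min(o(w,A), o(w,B_plain))) / (Σ_{w ∈ supp(A) ∪ supp(B_plain)} max(o(w,A), o(w,B_plain))). Then, provided A and B are not both empty, J(A, B_plain) = F_min(A, B_h) / (|A| + |B_h| − F_min(A, B_h)). -/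

import Mathlib

/-!
Per-salt injectivity of `H` means that an entry `(H (w', s), s)` of the hashed database matches the
guess `w` exactly when `w' = w`, so `g w` is the multiplicity of `w` among the plaintexts.  Then
`F_min` is `|A ∩ B_plain|`, the Jaccard index is `|A ∩ B_plain| / |A ∪ B_plain|`, and
`|A ∪ B_plain| = |A| + |B_plain| - |A ∩ B_plain|` with `|B_plain| = |B_h|`.
-/

namespace Multiset

variable {α : Type*} [DecidableEq α]

theorem sum_min_count_eq_card_inter {s : Finset α} {A B : Multiset α}
    (h : ∀ a ∈ A ∩ B, a ∈ s) :
    ∑ a ∈ s, min (A.count a) (B.count a) = card (A ∩ B) := by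
  simp_rw [← count_inter]
  exact sum_count_eq_card h

theorem sum_max_count_eq_card_union {s : Finset α} {A B : Multiset α}
    (h : ∀ a ∈ A ∪ B, a ∈ s) :
    ∑ a ∈ s, max (A.count a) (B.count a) = card (A ∪ B) := by
  simp_rw [← count_union]
  exact sum_count_eq_card h

theorem card_union_add_card_inter (A B : Multiset α) :
    card (A ∪ B) + card (A ∩ B) = card A + card B := by
  rw [← card_add, union_add_inter, card_add]

end Multiset

theorem List.length_filter_hash_match_eq_count {W S Y : Type*} [DecidableEq W] [DecidableEq Y]
    (H : W × S → Y) (hinj : ∀ s : S, Function.Injective fun w : W => H (w, s))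
    (B : List (W × S)) (w : W) :
    ((B.map fun p => (H p, p.2)).filter fun q : Y × S => q.1 = H (w, q.2)).length =
      (B.map Prod.fst).count w := by
  rw [← List.countP_eq_length_filter, List.countP_map, List.count_eq_countP, List.countP_map]
  refine List.countP_congr fun ⟨w', s⟩ _ => ?_
  simpa using (hinj s).eq_iff

open Multiset in
theorem gen_jaccard_of_hashed_general {W S Y : Type*} [DecidableEq W] [DecidableEq Y]
    (H : W × S → Y) (hinj : ∀ s : S, Function.Injective fun w : W => H (w, s))
    (A : Multiset W) (B : List (W × S))
    (Bplain : Multiset W) (hBplain : Bplain = (B.map Prod.fst : List W))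
    (Bh : List (Y × S)) (hBh : Bh = B.map fun p => (H p, p.2))
    (g : W → ℕ)
    (hg : ∀ w : W, g w = (Bh.filter fun q : Y × S => q.1 = H (w, q.2)).length)
    (Fmin : ℕ) (hFmin : Fmin = ∑ w ∈ A.toFinset, min (A.count w) (g w)) :
    ((∑ w ∈ A.toFinset ∪ Bplain.toFinset, min (A.count w) (Bplain.count w) : ℕ) : ℝ) /
      ((∑ w ∈ A.toFinset ∪ Bplain.toFinset, max (A.count w) (Bplain.count w) : ℕ) : ℝ) =
      (Fmin : ℝ) / ((Multiset.card A : ℝ) + (Bh.length : ℝ) - (Fmin : ℝ)) := by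
  have hg_count : ∀ w, g w = Bplain.count w := fun w => by
    rw [hg, hBh, hBplain, coe_count, List.length_filter_hash_match_eq_count H hinj]
  have hFmin_inter : Fmin = card (A ∩ Bplain) := by
    simp_rw [hFmin, hg_count]
    exact sum_min_count_eq_card_inter fun a ha => mem_toFinset.2 (mem_of_le inter_le_left ha)
  have hBh_card : Bh.length = card Bplain := by simp [hBh, hBplain]
  rw [sum_min_count_eq_card_inter fun a ha => by simp_all,
    sum_max_count_eq_card_union fun a ha => by simpa using ha, hFmin_inter, hBh_card,
    ← Nat.cast_add, ← card_union_add_card_inter, Nat.cast_add, add_sub_cancel_right]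

/-- Proposition 1: under per-salt injectivity of the hash `H`, the generalized
Jaccard index between a plaintext training multiset `A` and the multiset
`B_plain` of plaintext passwords of a salted & hashed database `B` equals
`F_min(A, B_h) / (|A| + |B_h| − F_min(A, B_h))`, where
`F_min(A, B_h) = Σ_{w ∈ supp(A)} min(o(w,A), g(w,B_h))` is computable from
`A` and the hashed database `B_h` alone. -/
theorem gen_jaccard_of_hashed {W S Y : Type*} [DecidableEq W] [DecidableEq Y]
    (H : W × S → Y) (hinj : ∀ s : S, Function.Injective fun w : W => H (w, s))
    (A : Multiset W) (B : List (W × S))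
    (Bplain : Multiset W) (hBplain : Bplain = (B.map Prod.fst : List W))
    (Bh : List (Y × S)) (hBh : Bh = B.map fun p => (H p, p.2))
    (g : W → ℕ)
    (hg : ∀ w : W, g w = (Bh.filter fun q : Y × S => q.1 = H (w, q.2)).length)
    (Fmin : ℕ) (hFmin : Fmin = ∑ w ∈ A.toFinset, min (A.count w) (g w))
    (hne : ¬(A = 0 ∧ B = [])) :
    ((∑ w ∈ A.toFinset ∪ Bplain.toFinset, min (A.count w) (Bplain.count w) : ℕ) : ℝ) /
      ((∑ w ∈ A.toFinset ∪ Bplain.toFinset, max (A.count w) (Bplain.count w) : ℕ) : ℝ) =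
      (Fmin : ℝ) / ((Multiset.card A : ℝ) + (Bh.length : ℝ) - (Fmin : ℝ)) :=
  gen_jaccard_of_hashed_general H hinj A B Bplain hBplain Bh hBh g hg Fmin hFmin
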